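/- arXiv:1811.05448 — 5 statements merged into one kernel-verified Lean document; each statement's English description precedes it below -/
import Mathlib

section
/- Let U be a λ-regular ultrafilter on a set I and let V be any set. Then for every family of functions (f_α : I → V)_{α<λ} there exists a function g : I → Finset V (assigning a finite subset of V to each index) such that for every α < λ the set { i ∈ I : f_α(i) ∈ g(i) } belongs to U. (In ultrapower language: every subset of V^I/U of size at most λ is pseudofinite, i.e. contained in an internal finite set.) -/
open Cardinal

/-- If `U` is a `λ`-regular ultrafilter on `I` (regularity witnessed by a family `A` indexed
by a type `ι` of cardinality `λ`), then for every family of functions `f : ι → I → V` there is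
`g : I → Finset V` such that for every `a : ι`, `{i | f a i ∈ g i} ∈ U`; i.e. every subset of
the ultrapower `V^I/U` of size at most `λ` is contained in an internal finite set. -/
theorem stmt_2 {I V ι : Type u} (U : Ultrafilter I) (lam : Cardinal.{u})
    (hlam : ℵ₀ ≤ lam) (hι : Cardinal.mk ι = lam)
    (A : ι → Set I) (hA : ∀ a, A a ∈ U)
    (hreg : ∀ T : Set ι, T.Infinite → (⋂ a ∈ T, A a) = ∅)
    (f : ι → I → V) :
    ∃ g : I → Finset V, ∀ a : ι, {i : I | f a i ∈ g i} ∈ U := by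
  classical
  have hfin : ∀ i : I, {a : ι | i ∈ A a}.Finite := by
    intro i
    by_contra h
    have := hreg _ h
    have hi : i ∈ ⋂ a ∈ {a : ι | i ∈ A a}, A a := by
      simp only [Set.mem_iInter]
      intro a ha; exact ha
    rw [this] at hi
    exact hi
  refine ⟨fun i => (hfin i).toFinset.image (fun a => f a i), fun a => ?_⟩
  refine U.mem_of_superset (hA a) ?_
  intro i hi
  simp only [Set.mem_setOf_eq, Finset.mem_image, Set.Finite.mem_toFinset]
  exact ⟨a, hi, rfl⟩
end

section
/- Let U be an ℵ₁-incomplete ultrafilter on a set I, and let (f_k : I → ℕ)_{k<ω} be a sequence of functions such that each f_k is U-nonstandard (for every n ∈ ℕ, { i : f_k(i) > n } ∈ U) and such that { i : f_{k+1}(i) ≤ f_k(i) } ∈ U for each k. Then there exists a U-nonstandard function g : I → ℕ such that { i : g(i) ≤ f_k(i) } ∈ U for every k < ω. (Hence the lower cofinality of ω in the ultrapower ℕ^I/U is uncountable.) -/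
/-- If `U` is an `ℵ₁`-incomplete ultrafilter on `I` and `(f_k)_{k<ω}` is a `U`-decreasing
sequence of `U`-nonstandard functions `I → ℕ`, then there is a `U`-nonstandard `g : I → ℕ`
with `{i | g i ≤ f_k i} ∈ U` for every `k`; hence the lower cofinality of `ω` in `ℕ^I/U`
is uncountable. -/
theorem stmt_5 {I : Type u} (U : Ultrafilter I)
    (B : ℕ → Set I) (hB : ∀ n, B n ∈ U) (hempty : (⋂ n, B n) = ∅)
    (f : ℕ → I → ℕ)
    (hns : ∀ k n : ℕ, {i : I | n < f k i} ∈ U)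
    (hdec : ∀ k : ℕ, {i : I | f (k + 1) i ≤ f k i} ∈ U) :
    ∃ g : I → ℕ, (∀ n : ℕ, {i : I | n < g i} ∈ U) ∧
      ∀ k : ℕ, {i : I | g i ≤ f k i} ∈ U := by
  classical
  set E : ℕ → Set I := fun m => (B m ∩ {i | m < f m i}) ∩ {i | f (m + 1) i ≤ f m i} with hE
  have hEU : ∀ m, E m ∈ U := fun m =>
    Filter.inter_mem (Filter.inter_mem (hB m) (hns m m)) (hdec m)
  have hex : ∀ i, ∃ n, i ∉ E n := by
    intro i
    by_contra h
    push_neg at h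
    have : i ∈ ⋂ n, B n := Set.mem_iInter.2 fun n => (h n).1.1
    simp [hempty] at this
  set g : I → ℕ := fun i => Nat.find (hex i) with hg
  have hlt : ∀ i m, m < g i → i ∈ E m := by
    intro i m hm
    exact not_not.1 (Nat.find_min (hex i) hm)
  have hCU : ∀ n, (⋂ m ∈ Finset.range (n + 1), E m) ∈ U :=
    fun n => (Filter.biInter_finset_mem _).2 fun m _ => hEU m
  refine ⟨g, ?_, ?_⟩
  · intro n
    refine U.toFilter.mem_of_superset (hCU n) ?_
    intro i hi
    simp only [Set.mem_iInter] at hi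
    by_contra hle
    simp only [Set.mem_setOf_eq, not_lt] at hle
    exact Nat.find_spec (hex i) (hi (g i) (Finset.mem_range.2 (Nat.lt_succ_of_le hle)))
  · intro k
    refine U.toFilter.mem_of_superset (hCU k) ?_
    intro i hi
    simp only [Set.mem_iInter] at hi
    have hNk : k < g i := by
      by_contra hle
      push_neg at hle
      exact Nat.find_spec (hex i) (hi (g i) (Finset.mem_range.2 (by omega)))
    have chain : ∀ d, k + d < g i → f (k + d) i ≤ f k i := by
      intro d
      induction d with
      | zero => intro _; exact le_refl _
      | succ d ih =>
        intro hd
        have h1 : i ∈ E (k + d) := hlt i (k + d) (by omega)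
        have h2 : f (k + d + 1) i ≤ f (k + d) i := h1.2
        exact le_trans h2 (ih (by omega))
    have hN1 : i ∈ E (g i - 1) := hlt i (g i - 1) (by omega)
    have h3 : g i - 1 < f (g i - 1) i := hN1.1.2
    have h4 : f (g i - 1) i ≤ f k i := by
      have := chain (g i - 1 - k) (by omega)
      rwa [show k + (g i - 1 - k) = g i - 1 by omega] at this
    simp only [Set.mem_setOf_eq]
    omega
end

section
/- Let L be a countable first-order language, U an ℵ₁-incomplete ultrafilter on a set I, and M an L-structure. Then the ultrapower M^I/U is ℵ₁-saturated: every countable set of L-formulas in one free variable, with parameters from M^I/U, which is finitely satisfiable in M^I/U, is realized by an element of M^I/U. -/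
/-!
Let `φ₀, φ₁, …` be finitely satisfiable and pick, for each `k`, a representative `g k` of an
element realizing `φ₀, …, φ_k`. By Łoś, the set of coordinates where `g k` realizes `φ₀, …, φ_k`
lies in `U`; intersecting with `B₀, …, B_k` gives a decreasing chain `D₀ ⊇ D₁ ⊇ ⋯` of sets in `U`
with empty intersection. Every coordinate `a` thus lies in a last set `D_{n(a)}`, and the diagonal
`f a := g (n a) a` realizes `φ_k` at every `a ∈ D_k` (as `k ≤ n a` there), so by Łoś again `[f]`
realizes every `φ_k`.
-/

open FirstOrder Filter

theorem exists_forall_mem_imp_le_and_mem_of_antitone {I : Type*} {D : ℕ → Set I}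
    (hD : Antitone D) (hempty : ⋂ k, D k = ∅) :
    ∃ n : I → ℕ, ∀ k a, a ∈ D k → k ≤ n a ∧ a ∈ D (n a) := by
  classical
  have hexit : ∀ a, ∃ k, a ∉ D k := fun a => by
    by_contra! h
    simpa [hempty] using Set.mem_iInter.2 h
  refine ⟨fun a => Nat.find (hexit a) - 1, fun k a ha => ?_⟩
  dsimp only
  have hk : k < Nat.find (hexit a) :=
    Nat.lt_find_iff _ _ |>.2 fun m hm => not_not.2 (hD hm ha)
  exact ⟨by omega, not_not.1 (Nat.find_min (hexit a) (by omega))⟩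

theorem Filter.exists_forall_eventually_of_iInter_eq_empty {I : Type*} {l : Filter I}
    {B : ℕ → Set I} (hB : ∀ n, B n ∈ l) (hempty : ⋂ n, B n = ∅) {M : I → Type*}
    (Q : ℕ → (a : I) → M a → Prop) (g : ℕ → (a : I) → M a)
    (hg : ∀ k, ∀ j ≤ k, ∀ᶠ a in l, Q j a (g k a)) :
    ∃ f : (a : I) → M a, ∀ k, ∀ᶠ a in l, Q k a (f a) := by
  set D : ℕ → Set I := fun k => {a | ∀ m ≤ k, a ∈ B m ∧ ∀ j ≤ m, Q j a (g m a)}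
  have hDmem : ∀ k, D k ∈ l := fun k =>
    (eventually_all_finite (Set.finite_Iic k)).2 fun m _ =>
      Eventually.and (hB m) <| (eventually_all_finite (Set.finite_Iic m)).2 (hg m)
  have hDanti : Antitone D := fun k k' hkk' a ha m hm => ha m (hm.trans hkk')
  have hDempty : ⋂ k, D k = ∅ :=
    Set.subset_eq_empty (Set.iInter_mono fun k a ha => (ha k le_rfl).1) hempty
  obtain ⟨n, hn⟩ := exists_forall_mem_imp_le_and_mem_of_antitone hDanti hDempty
  refine ⟨fun a => g (n a) a, fun k => mem_of_superset (hDmem k) fun a ha => ?_⟩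
  obtain ⟨hk, hna⟩ := hn k a ha
  exact (hna (n a) le_rfl).2 k hk

namespace FirstOrder.Language.Ultraproduct

variable {I : Type*} {U : Ultrafilter I} {M : I → Type*} {L : Language} [∀ a, L.Structure (M a)]

theorem realize_sumElim_coe_iff [∀ a, Nonempty (M a)] {β : Type*} (φ : L.Formula (β ⊕ Unit))
    (p : β → (U : Filter I).Product M) (f : (a : I) → M a) :
    φ.Realize (Sum.elim p fun _ => (f : (U : Filter I).Product M)) ↔
      ∀ᶠ a in U, φ.Realize (Sum.elim (fun b => Quotient.out (p b) a) fun _ => f a) := by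
  have hv : (Sum.elim p fun _ : Unit => (f : (U : Filter I).Product M)) =
      fun i : β ⊕ Unit =>
        ((Sum.elim (fun b => Quotient.out (p b)) fun _ => f) i : (U : Filter I).Product M) := by
    ext (b | _)
    · exact (Quotient.out_eq (p b)).symm
    · rfl
  rw [hv]
  refine (realize_formula_cast φ _).trans (eventually_congr (.of_forall fun a => ?_))
  congr! 1
  ext (b | _) <;> rfl

theorem exists_realize_of_finite_satisfiable {B : ℕ → Set I} (hB : ∀ n, B n ∈ U)
    (hempty : ⋂ n, B n = ∅) {β : Type*} (φ : ℕ → L.Formula (β ⊕ Unit))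
    (p : β → (U : Filter I).Product M)
    (hfs : ∀ s : Finset ℕ, ∃ x : (U : Filter I).Product M,
      ∀ k ∈ s, (φ k).Realize (Sum.elim p fun _ => x)) :
    ∃ x : (U : Filter I).Product M, ∀ k, (φ k).Realize (Sum.elim p fun _ => x) := by
  obtain ⟨x₀, -⟩ := hfs ∅
  have : ∀ a, Nonempty (M a) := fun a => ⟨Quotient.out x₀ a⟩
  have hwit : ∀ k, ∃ g : (a : I) → M a,
      ∀ j ≤ k, (φ j).Realize (Sum.elim p fun _ => (g : (U : Filter I).Product M)) := fun k => by
    obtain ⟨x, hx⟩ := hfs (Finset.Iic k)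
    refine ⟨Quotient.out x, fun j hj => ?_⟩
    rw [show ((Quotient.out x : (a : I) → M a) : (U : Filter I).Product M) = x from
      Quotient.out_eq x]
    exact hx j (Finset.mem_Iic.2 hj)
  choose g hg using hwit
  obtain ⟨f, hf⟩ := exists_forall_eventually_of_iInter_eq_empty hB hempty
    (fun j a m => (φ j).Realize (Sum.elim (fun b => Quotient.out (p b) a) fun _ => m)) g
    fun k j hj => (realize_sumElim_coe_iff _ _ _).1 (hg k j hj)
  exact ⟨f, fun k => (realize_sumElim_coe_iff _ _ _).2 (hf k)⟩

end FirstOrder.Language.Ultraproduct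

theorem stmt_6_general {I : Type u} (L : FirstOrder.Language.{u, u})
    (U : Ultrafilter I) (B : ℕ → Set I) (hB : ∀ n, B n ∈ U) (hempty : (⋂ n, B n) = ∅)
    (M : Type u) [L.Structure M]
    (φ : ℕ → L.Formula ((↑U : Filter I).Product (fun _ : I => M) ⊕ Unit))
    (hfs : ∀ s : Finset ℕ, ∃ x : (↑U : Filter I).Product (fun _ : I => M),
      ∀ k ∈ s, (φ k).Realize (Sum.elim id fun _ => x)) :
    ∃ x : (↑U : Filter I).Product (fun _ : I => M),
      ∀ k : ℕ, (φ k).Realize (Sum.elim id fun _ => x) :=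
  Language.Ultraproduct.exists_realize_of_finite_satisfiable hB hempty φ id hfs

/-- Let `L` be a countable first-order language, `U` an `ℵ₁`-incomplete ultrafilter on a set
`I`, and `M` an `L`-structure. Then the ultrapower `M^I/U` is `ℵ₁`-saturated: every countable
set of `L`-formulas in one free variable with parameters from `M^I/U` that is finitely
satisfiable in `M^I/U` is realized in `M^I/U`. -/
theorem stmt_6 {I : Type u} (L : FirstOrder.Language.{u, u})
    (hL : L.card ≤ Cardinal.aleph0)
    (U : Ultrafilter I) (B : ℕ → Set I) (hB : ∀ n, B n ∈ U) (hempty : (⋂ n, B n) = ∅)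
    (M : Type u) [L.Structure M]
    (φ : ℕ → L.Formula ((↑U : Filter I).Product (fun _ : I => M) ⊕ Unit))
    (hfs : ∀ s : Finset ℕ, ∃ x : (↑U : Filter I).Product (fun _ : I => M),
      ∀ k ∈ s, (φ k).Realize (Sum.elim id fun _ => x)) :
    ∃ x : (↑U : Filter I).Product (fun _ : I => M),
      ∀ k : ℕ, (φ k).Realize (Sum.elim id fun _ => x) :=
  stmt_6_general L U B hB hempty M φ hfs
end

section
/- Let κ be an infinite cardinal and α an ordinal. In the partial order P of finite partial functions from α to κ (ordered by reverse inclusion, where two conditions are compatible iff their union is a function), every antichain (pairwise incompatible family) has cardinality at most κ. Hence P has the κ⁺-chain condition. -/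
open Cardinal

/-- Key lemma: antichains of conditions of size `≤ n` have cardinality at most `#K`,
by induction on `n`. -/
theorem stmt_10_key {A K : Type u} [Infinite K] (n : ℕ) :
    ∀ (C : Set (Finset (A × K))),
    (∀ s ∈ C, ∀ x ∈ s, ∀ y ∈ s, (x : A × K).1 = (y : A × K).1 → x = y) →
    (∀ s ∈ C, ∀ t ∈ C, s ≠ t →
      ∃ (a : A) (b b' : K), b ≠ b' ∧ (a, b) ∈ s ∧ (a, b') ∈ t) →
    (∀ s ∈ C, s.card ≤ n) → Cardinal.mk C ≤ Cardinal.mk K := by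
  induction n with
  | zero =>
    intro C hfun hanti hcard
    classical
    have hsub : C.Subsingleton := by
      intro s hs t ht
      have hs0 : s = ∅ := Finset.card_eq_zero.mp (Nat.le_zero.mp (hcard s hs))
      have ht0 : t = ∅ := Finset.card_eq_zero.mp (Nat.le_zero.mp (hcard t ht))
      rw [hs0, ht0]
    calc Cardinal.mk C ≤ 1 := Cardinal.mk_le_one_iff_set_subsingleton.mpr hsub
      _ ≤ Cardinal.mk K := Cardinal.one_le_aleph0.trans (Cardinal.aleph0_le_mk K)
  | succ n ih =>
    intro C hfun hanti hcard
    classical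
    rcases C.eq_empty_or_nonempty with rfl | ⟨s₀, hs₀⟩
    · simp
    set κ := Cardinal.mk K with hκ
    have hκ0 : ℵ₀ ≤ κ := Cardinal.aleph0_le_mk K
    -- the set of conditions other than s₀
    set D : Set (Finset (A × K)) := C \ {s₀} with hD
    -- choose disagreement data with s₀
    have H : ∀ t : D, ∃ (a : A) (b b' : K),
        b ≠ b' ∧ (a, b) ∈ s₀ ∧ (a, b') ∈ (t : Finset (A × K)) := by
      intro t
      exact hanti s₀ hs₀ t t.2.1 (Ne.symm t.2.2)
    choose a b b' hbb hab hab' using H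
    -- for a pair q, the erased family
    have key : ∀ q : A × K, Cardinal.mk {u : Finset (A × K) | ∃ t ∈ C, q ∈ t ∧ u = t.erase q}
        ≤ κ := by
      intro q
      apply ih
      · rintro u ⟨t, htC, hqt, rfl⟩ x hx y hy hxy
        exact hfun t htC x (Finset.mem_of_mem_erase hx) y (Finset.mem_of_mem_erase hy) hxy
      · rintro u ⟨t, htC, hqt, rfl⟩ v ⟨t', ht'C, hqt', rfl⟩ huv
        have htt : t ≠ t' := by
          rintro rfl; exact huv rfl
        obtain ⟨c, d, d', hdd, hcd, hcd'⟩ := hanti t htC t' ht'C htt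
        refine ⟨c, d, d', hdd, Finset.mem_erase.mpr ⟨?_, hcd⟩, Finset.mem_erase.mpr ⟨?_, hcd'⟩⟩
        · intro hcq
          -- (c,d) = q; then (c,d') ∈ t' and q ∈ t' with same first coord
          apply hdd
          have h1 : (c, d') = q := hfun t' ht'C (c, d') hcd' q hqt' (by rw [← hcq])
          have : (c, d) = (c, d') := hcq.trans h1.symm
          exact (Prod.mk.injEq .. ▸ this).2
        · intro hcq
          apply hdd
          have h1 : (c, d) = q := hfun t htC (c, d) hcd q hqt (by rw [← hcq])
          have : (c, d) = (c, d') := h1.trans hcq.symm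
          exact (Prod.mk.injEq .. ▸ this).2
      · rintro u ⟨t, htC, hqt, rfl⟩
        have := hcard t htC
        rw [Finset.card_erase_of_mem hqt]
        omega
    -- bound each fiber of the "index" map
    have hDle : Cardinal.mk D ≤ κ := by
      set idx : D → (↥s₀ × K) := fun t => (⟨(a t, b t), hab t⟩, b' t) with hidx
      have hfiber : ∀ p : ↥s₀ × K, Cardinal.mk (idx ⁻¹' {p}) ≤ κ := by
        intro p
        set q : A × K := ((p.1 : A × K).1, p.2) with hq
        have hqmem : ∀ t : D, idx t = p → q ∈ (t : Finset (A × K)) := by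
          intro t ht
          have h1 : (a t, b t) = (p.1 : A × K) := congrArg (fun r => (r.1 : A × K)) ht
          have h1' : a t = (p.1 : A × K).1 := congrArg Prod.fst h1
          have h2 : b' t = p.2 := congrArg (fun r => r.2) ht
          have := hab' t
          rwa [h1', h2] at this
        have hinj : ∃ f : (idx ⁻¹' {p}) → {u : Finset (A × K) | ∃ t ∈ C, q ∈ t ∧ u = t.erase q},
            Function.Injective f := by
          refine ⟨fun t => ⟨(t.1 : Finset (A × K)).erase q, t.1.1, t.1.2.1, hqmem t.1 t.2, rfl⟩, ?_⟩
          rintro ⟨t, ht⟩ ⟨t', ht'⟩ hEq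
          have heq : (t : Finset (A × K)).erase q = (t' : Finset (A × K)).erase q :=
            congrArg Subtype.val hEq
          have : (t : Finset (A × K)) = (t' : Finset (A × K)) := by
            rw [← Finset.insert_erase (hqmem t ht), ← Finset.insert_erase (hqmem t' ht'), heq]
          exact Subtype.ext (Subtype.ext this)
        obtain ⟨f, hf⟩ := hinj
        exact le_trans (Cardinal.mk_le_of_injective hf) (key q)
      have h1 : Cardinal.mk D ≤ Cardinal.mk (↥s₀ × K) * κ :=
        Cardinal.mk_le_mk_mul_of_mk_preimage_le idx hfiber
      have h2 : Cardinal.mk (↥s₀ × K) ≤ κ := by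
        rw [Cardinal.mk_prod, Cardinal.lift_id, Cardinal.lift_id]
        calc Cardinal.mk ↥s₀ * κ ≤ κ * κ :=
              mul_le_mul_left (le_trans Cardinal.mk_le_aleph0 hκ0) κ
          _ = κ := Cardinal.mul_eq_self hκ0
      calc Cardinal.mk D ≤ κ * κ := h1.trans (mul_le_mul_left h2 κ)
        _ = κ := Cardinal.mul_eq_self hκ0
    have hCins : C = insert s₀ D := (Set.insert_diff_singleton.trans
      (Set.insert_eq_self.mpr hs₀)).symm
    calc Cardinal.mk C ≤ Cardinal.mk D + 1 := by rw [hCins]; exact Cardinal.mk_insert_le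
      _ ≤ κ + κ := add_le_add hDle (Cardinal.one_le_aleph0.trans hκ0)
      _ = κ := Cardinal.add_eq_self hκ0

/-- In the partial order of finite partial functions from `A` to an infinite `K` (represented
as finite subsets of `A × K` that are graphs of functions), ordered by reverse inclusion,
every antichain (pairwise incompatible family, where incompatibility means disagreement at a
common point of the domains) has cardinality at most `|K|`. Hence this poset has the
`κ⁺`-chain condition, where `κ = |K|` is infinite. -/
theorem stmt_10 {A K : Type u} [Infinite K]
    (C : Set (Finset (A × K)))
    (hfun : ∀ s ∈ C, ∀ x ∈ s, ∀ y ∈ s, (x : A × K).1 = (y : A × K).1 → x = y)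
    (hanti : ∀ s ∈ C, ∀ t ∈ C, s ≠ t →
      ∃ (a : A) (b b' : K), b ≠ b' ∧ (a, b) ∈ s ∧ (a, b') ∈ t) :
    Cardinal.mk C ≤ Cardinal.mk K := by
  have hκ0 : ℵ₀ ≤ Cardinal.mk K := Cardinal.aleph0_le_mk K
  have hU : C = ⋃ n : ULift.{u} ℕ, {s ∈ C | s.card = n.down} := by
    ext s
    simp only [Set.mem_iUnion, Set.mem_setOf_eq]
    exact ⟨fun h => ⟨⟨s.card⟩, h, rfl⟩, fun ⟨n, h, _⟩ => h⟩
  have hn : ∀ n : ULift.{u} ℕ, Cardinal.mk {s ∈ C | s.card = n.down} ≤ Cardinal.mk K := by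
    intro n
    apply stmt_10_key n.down
    · exact fun s hs => hfun s hs.1
    · exact fun s hs t ht => hanti s hs.1 t ht.1
    · exact fun s hs => le_of_eq hs.2
  calc Cardinal.mk C ≤ Cardinal.sum fun n : ULift.{u} ℕ => Cardinal.mk {s ∈ C | s.card = n.down} := by
        conv_lhs => rw [hU]
        exact Cardinal.mk_iUnion_le_sum_mk
    _ ≤ Cardinal.sum fun _ : ULift.{u} ℕ => Cardinal.mk K := Cardinal.sum_le_sum _ _ hn
    _ = Cardinal.mk (ULift.{u} ℕ) * Cardinal.mk K := Cardinal.sum_const' _ _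
    _ ≤ Cardinal.mk K * Cardinal.mk K := by
        apply mul_le_mul_left
        rw [Cardinal.mk_uLift, Cardinal.mk_nat, Cardinal.lift_aleph0]
        exact hκ0
    _ = Cardinal.mk K := Cardinal.mul_eq_self hκ0
end

section
/- Let λ be an infinite cardinal, U a λ-regular ultrafilter on λ, and let M₀, M₁ be elementarily equivalent structures in a countable language L. Then the ultrapower M₀^λ/U is λ⁺-saturated if and only if M₁^λ/U is λ⁺-saturated. (Keisler's theorem: λ⁺-saturation of regular ultrapowers depends only on the theory of the model.) -/
/-!
Keisler's pattern argument. By regularity each index `i` lies in only finitely many of the sets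
`A k`, so at coordinate `i` only the finite family `s i = {k | i ∈ A k}` of the type matters. Which
subsets of `s i` are jointly realizable with the `i`-th coordinates of the parameters is expressed
by one formula, so by elementary equivalence there are parameters in `M₀` with the same pattern.
By Łoś the type over `M₀^λ/U` with these parameters is finitely satisfiable; a realization of it
picks at every `i` a realizable subset of `s i`, and witnesses in `M₁` for these subsets assemble
into a realization of the original type.
-/

open FirstOrder

universe u

/-- A structure `N` is `λ⁺`-saturated (where `λ = |ι|`) when every family, indexed by `ι`, of
`L`-formulas in one free variable with parameters from `N` that is finitely satisfiable in `N`
is realized in `N`. -/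
def IsSatUpTo (ι : Type u) (L : FirstOrder.Language.{u, u}) (N : Type u)
    [L.Structure N] : Prop :=
  ∀ φ : ι → L.Formula (N ⊕ Unit),
    (∀ s : Finset ι, ∃ x : N, ∀ k ∈ s, (φ k).Realize (Sum.elim id fun _ => x)) →
      ∃ x : N, ∀ k : ι, (φ k).Realize (Sum.elim id fun _ => x)

theorem Set.finite_setOf_mem_of_biInter_eq_empty {ι κ : Type*} {A : κ → Set ι}
    (hA : ∀ T : Set κ, T.Infinite → ⋂ k ∈ T, A k = ∅) (i : ι) : {k | i ∈ A k}.Finite :=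
  Set.not_infinite.1 fun hinf =>
    Set.eq_empty_iff_forall_notMem.1 (hA _ hinf) i (Set.mem_iInter₂.2 fun _ hk => hk)

namespace FirstOrder.Language

variable {L : Language} {ι κ β M M₀ M₁ : Type*} [L.Structure M] [L.Structure M₀] [L.Structure M₁]

def JointlyRealizable (ψ : κ → L.Formula (β ⊕ Unit)) (v : β → M) (t : Finset κ) : Prop :=
  ∃ x : M, ∀ k ∈ t, (ψ k).Realize (Sum.elim v fun _ => x)

namespace Formula

noncomputable def jointlyRealizable (ψ : κ → L.Formula (β ⊕ Unit)) (t : Finset κ) :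
    L.Formula β :=
  iExs Unit (BoundedFormula.iInf fun k : t => ψ k)

theorem realize_jointlyRealizable (ψ : κ → L.Formula (β ⊕ Unit)) (t : Finset κ) (v : β → M) :
    (jointlyRealizable ψ t).Realize v ↔ JointlyRealizable ψ v t := by
  simp only [jointlyRealizable, realize_iExs, JointlyRealizable]
  exact ⟨fun ⟨x, hx⟩ => ⟨x (), fun k hk => BoundedFormula.realize_iInf.1 hx ⟨k, hk⟩⟩,
    fun ⟨x, hx⟩ => ⟨fun _ => x, BoundedFormula.realize_iInf.2 fun k => hx k k.2⟩⟩

noncomputable def realizabilityPattern (ψ : κ → L.Formula (β ⊕ Unit)) (s : Finset κ)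
    (P : Finset κ → Prop) [DecidablePred P] : L.Formula β :=
  BoundedFormula.iInf fun t : s.powerset =>
    if P t then jointlyRealizable ψ t else ∼(jointlyRealizable ψ t)

theorem realize_realizabilityPattern (ψ : κ → L.Formula (β ⊕ Unit)) (s : Finset κ)
    (P : Finset κ → Prop) [DecidablePred P] (v : β → M) :
    (realizabilityPattern ψ s P).Realize v ↔ ∀ t ⊆ s, (JointlyRealizable ψ v t ↔ P t) := by
  simp only [Formula.Realize, realizabilityPattern, BoundedFormula.realize_iInf, Subtype.forall,
    Finset.mem_powerset]
  refine forall₂_congr fun t _ => ?_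
  rw [← realize_jointlyRealizable]
  split_ifs with hP <;> simp [Formula.Realize, hP]

theorem exists_realize_iff_realize_exClosure [DecidableEq β] [Nonempty M] (φ : L.Formula β) :
    (∃ v : β → M, φ.Realize v) ↔ M ⊨ φ.exClosure := by
  have key (v : β → M) : Formula.Realize (φ.restrictFreeVar id) (fun b => v b) ↔ φ.Realize v :=
    BoundedFormula.realize_restrictFreeVar v fun _ => rfl
  rw [realize_exClosure]
  constructor
  · rintro ⟨v, hv⟩
    exact ⟨fun b => v b, (key v).2 hv⟩
  · rintro ⟨w, hw⟩
    refine ⟨fun b => if hb : b ∈ φ.freeVarFinset then w ⟨b, hb⟩ else Classical.arbitrary M, ?_⟩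
    rw [← key]
    convert hw using 2 with b
    simp

end Formula

namespace ElementarilyEquivalent

theorem exists_realize_iff [Nonempty M₀] [Nonempty M₁] (h : M₀ ≅[L] M₁) (φ : L.Formula β) :
    (∃ v : β → M₀, φ.Realize v) ↔ ∃ v : β → M₁, φ.Realize v := by
  classical
  rw [Formula.exists_realize_iff_realize_exClosure, Formula.exists_realize_iff_realize_exClosure]
  exact h.realize_sentence _

theorem exists_forall_subset_jointlyRealizable_iff [Nonempty M₀] [Nonempty M₁] (h : M₀ ≅[L] M₁)
    (ψ : κ → L.Formula (β ⊕ Unit)) (s : Finset κ) (v₁ : β → M₁) :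
    ∃ v₀ : β → M₀, ∀ t ⊆ s, (JointlyRealizable ψ v₀ t ↔ JointlyRealizable ψ v₁ t) := by
  classical
  simp only [← Formula.realize_realizabilityPattern]
  exact (h.exists_realize_iff _).2 ⟨v₁, (Formula.realize_realizabilityPattern ..).2 fun _ _ => .rfl⟩

end ElementarilyEquivalent

abbrev Ultrapower (U : Ultrafilter ι) (M : Type*) : Type _ :=
  (U : Filter ι).Product fun _ : ι => M

namespace Ultrapower

variable {U : Ultrafilter ι}

theorem exists_coe_eq (X : Ultrapower U M) : ∃ x : ι → M, (x : Ultrapower U M) = X :=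
  Quotient.inductionOn X fun x => ⟨x, rfl⟩

instance [IsEmpty M] : IsEmpty (Ultrapower U M) :=
  have : Nonempty ι := (U : Filter ι).nonempty_of_neBot
  ⟨fun X => isEmptyElim ((exists_coe_eq X).choose (Classical.arbitrary ι))⟩

variable [Nonempty M]

theorem realize_sumElim_coe (φ : L.Formula (β ⊕ Unit)) (p : β → ι → M) (x : ι → M) :
    φ.Realize (Sum.elim (fun b => (p b : Ultrapower U M)) fun _ => (x : Ultrapower U M)) ↔
      ∀ᶠ i in U, φ.Realize (Sum.elim (fun b => p b i) fun _ => x i) := by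
  convert Ultraproduct.realize_formula_cast (M := fun _ => M) (u := U) φ (Sum.elim p fun _ => x)
    using 3 with i
  · cases i <;> rfl
  · rw [iff_iff_eq]; congr; funext b; cases b <;> rfl

theorem jointlyRealizable_coe_iff (ψ : κ → L.Formula (β ⊕ Unit)) (p : β → ι → M)
    (t : Finset κ) :
    JointlyRealizable ψ (fun b => (p b : Ultrapower U M)) t ↔
      ∀ᶠ i in U, JointlyRealizable ψ (p · i) t := by
  simp only [← Formula.realize_jointlyRealizable]
  exact Ultraproduct.realize_formula_cast _ _

end Ultrapower

section Pattern

variable {U : Ultrafilter ι} [Nonempty M₀] [Nonempty M₁] {s : ι → Finset κ}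
  {ψ : κ → L.Formula (β ⊕ Unit)} {p₀ : β → ι → M₀} {p₁ : β → ι → M₁}

theorem jointlyRealizable_coe_of_pattern
    (hp : ∀ i, ∀ t ⊆ s i, JointlyRealizable ψ (p₁ · i) t → JointlyRealizable ψ (p₀ · i) t)
    (hs : ∀ k, ∀ᶠ i in U, k ∈ s i) {t : Finset κ}
    (h : JointlyRealizable ψ (fun b => (p₁ b : Ultrapower U M₁)) t) :
    JointlyRealizable ψ (fun b => (p₀ b : Ultrapower U M₀)) t := by
  have hts : ∀ᶠ i in U, t ⊆ s i := (Filter.eventually_all_finset t).2 fun k _ => hs k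
  rw [Ultrapower.jointlyRealizable_coe_iff] at h ⊢
  filter_upwards [h, hts] with i hi hti using hp i t hti hi

theorem exists_realize_coe_of_pattern
    (hp : ∀ i, ∀ t ⊆ s i, JointlyRealizable ψ (p₀ · i) t → JointlyRealizable ψ (p₁ · i) t)
    (hs : ∀ k, ∀ᶠ i in U, k ∈ s i)
    (h : ∃ X : Ultrapower U M₀, ∀ k, (ψ k).Realize (Sum.elim (fun b => ↑(p₀ b)) fun _ => X)) :
    ∃ Y : Ultrapower U M₁, ∀ k, (ψ k).Realize (Sum.elim (fun b => ↑(p₁ b)) fun _ => Y) := by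
  classical
  obtain ⟨X, hX⟩ := h
  obtain ⟨x, rfl⟩ := Ultrapower.exists_coe_eq X
  let t i := (s i).filter fun k => (ψ k).Realize (Sum.elim (p₀ · i) fun _ => x i)
  have ht i : JointlyRealizable ψ (p₁ · i) (t i) :=
    hp i (t i) (Finset.filter_subset _ _) ⟨x i, fun _ hk => (Finset.mem_filter.1 hk).2⟩
  choose y hy using ht
  refine ⟨y, fun k => (Ultrapower.realize_sumElim_coe _ _ _).2 ?_⟩
  filter_upwards [hs k, (Ultrapower.realize_sumElim_coe _ _ _).1 (hX k)] with i hki hxi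
    using hy i k (Finset.mem_filter.2 ⟨hki, hxi⟩)

end Pattern

end FirstOrder.Language

namespace IsSatUpTo

open FirstOrder.Language

theorem of_isEmpty {ι : Type u} {L : FirstOrder.Language.{u, u}} {N : Type u} [L.Structure N]
    [IsEmpty N] : IsSatUpTo ι L N :=
  fun _ hfin => isEmptyElim (hfin ∅).choose

theorem ultrapower_of_elementarilyEquivalent {ι : Type u} {L : FirstOrder.Language.{u, u}}
    {M₀ M₁ : Type u} [L.Structure M₀] [L.Structure M₁] [Nonempty M₀] [Nonempty M₁]
    {U : Ultrafilter ι} {A : ι → Set ι} (hA : ∀ a, A a ∈ U)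
    (hreg : ∀ T : Set ι, T.Infinite → ⋂ a ∈ T, A a = ∅) (h : M₀ ≅[L] M₁)
    (hsat : IsSatUpTo ι L (Ultrapower U M₀)) : IsSatUpTo ι L (Ultrapower U M₁) := by
  intro φ hfin
  choose p₁ hp₁ using Ultrapower.exists_coe_eq (U := U) (M := M₁)
  have hp₁_id : (fun X => (p₁ X : Ultrapower U M₁)) = id := funext hp₁
  let s i := (Set.finite_setOf_mem_of_biInter_eq_empty hreg i).toFinset
  have hs k : ∀ᶠ i in U, k ∈ s i := by simpa [s] using hA k
  choose p₀ hp₀ using fun i => h.exists_forall_subset_jointlyRealizable_iff φ (s i) (p₁ · i)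
  let φ₀ k := (φ k).relabel (Sum.map (fun X => ((p₀ · X) : Ultrapower U M₀)) id)
  have hφ₀ k (Y : Ultrapower U M₀) : (φ₀ k).Realize (Sum.elim id fun _ => Y) ↔
      (φ k).Realize (Sum.elim (fun X => ((p₀ · X) : Ultrapower U M₀)) fun _ => Y) := by
    rw [Formula.realize_relabel]
    exact iff_of_eq (congrArg _ (funext fun b => by cases b <;> rfl))
  obtain ⟨Y, hY⟩ := hsat φ₀ fun t => by
    obtain ⟨x, hx⟩ := jointlyRealizable_coe_of_pattern (p₀ := fun X i => p₀ i X)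
      (fun i t ht => (hp₀ i t ht).2) hs (hp₁_id ▸ hfin t)
    exact ⟨x, fun k hk => (hφ₀ k x).2 (hx k hk)⟩
  simpa only [hp₁_id] using exists_realize_coe_of_pattern (p₁ := p₁)
    (fun i t ht => (hp₀ i t ht).1) hs ⟨Y, fun k => (hφ₀ k Y).1 (hY k)⟩

end IsSatUpTo

theorem stmt_12_general {ι : Type u} (U : Ultrafilter ι)
    (A : ι → Set ι) (hA : ∀ a, A a ∈ U)
    (hreg : ∀ T : Set ι, T.Infinite → (⋂ a ∈ T, A a) = ∅)
    (L : FirstOrder.Language.{u, u})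
    (M₀ M₁ : Type u) [L.Structure M₀] [L.Structure M₁]
    (heq : M₀ ≅[L] M₁) :
    IsSatUpTo ι L ((↑U : Filter ι).Product fun _ : ι => M₀) ↔
      IsSatUpTo ι L ((↑U : Filter ι).Product fun _ : ι => M₁) := by
  by_cases hM : Nonempty M₀
  · have : Nonempty M₁ := heq.nonempty_iff.1 hM
    exact ⟨.ultrapower_of_elementarilyEquivalent hA hreg heq,
      .ultrapower_of_elementarilyEquivalent hA hreg heq.symm⟩
  · have : IsEmpty M₀ := not_nonempty_iff.1 hM
    have : IsEmpty M₁ := not_nonempty_iff.1 (heq.nonempty_iff.not.1 hM)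
    exact iff_of_true .of_isEmpty .of_isEmpty

/-- Keisler's theorem: if `λ` is an infinite cardinal (here the cardinality of the infinite
index type `ι`), `U` a `λ`-regular ultrafilter on `λ`, and `M₀, M₁` elementarily equivalent
structures in a countable language `L`, then the ultrapower `M₀^λ/U` is `λ⁺`-saturated iff
`M₁^λ/U` is. -/
theorem stmt_12 {ι : Type u} [Infinite ι] (U : Ultrafilter ι)
    (A : ι → Set ι) (hA : ∀ a, A a ∈ U)
    (hreg : ∀ T : Set ι, T.Infinite → (⋂ a ∈ T, A a) = ∅)
    (L : FirstOrder.Language.{u, u}) (hL : L.card ≤ Cardinal.aleph0)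
    (M₀ M₁ : Type u) [L.Structure M₀] [L.Structure M₁]
    (heq : M₀ ≅[L] M₁) :
    IsSatUpTo ι L ((↑U : Filter ι).Product fun _ : ι => M₀) ↔
      IsSatUpTo ι L ((↑U : Filter ι).Product fun _ : ι => M₁) :=
  stmt_12_general U A hA hreg L M₀ M₁ heq
end
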